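/- Let G be a strongly connected directed graph with m edges, α ∈ [0,1], and 0 < s < 1. Then the discrete Ricci curvature flow w_e^{(j+1)} = w_e^{(j)} − s·κ_e^{(j)}·ρ_e^{(j)} with positive initial weights w_e^{(0)} = w_{0,e} has a unique solution with w_e^{(j)} > 0 for all e ∈ E and j ∈ ℕ, satisfying (1−s)^j · w_{0,e} ≤ w_e^{(j)} ≤ (1+ms)^j · Σ_{τ∈E} w_{0,τ}. -/

import Mathlib

open Finset

variable {V E : Type*}

/-- `p` is a directed path (list of edges) from `x` to `y`. -/
def IsPathFrom (src tgt : E → V) : V → V → List E → Prop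
  | x, y, [] => x = y
  | x, y, e :: p => src e = x ∧ IsPathFrom src tgt (tgt e) y p

/-- Total weight of a path. -/
def pathWeight (w : E → ℝ) (p : List E) : ℝ := (p.map w).sum

/-- Directed shortest-path distance induced by weights `w`. -/
noncomputable def gdist (src tgt : E → V) (w : E → ℝ) (x y : V) : ℝ :=
  sInf {c : ℝ | ∃ p : List E, IsPathFrom src tgt x y p ∧ c = pathWeight w p}

/-- A directed graph is strongly connected if any vertex can reach any other. -/
def StronglyConnected (src tgt : E → V) : Prop :=
  ∀ x y : V, ∃ p : List E, IsPathFrom src tgt x y p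

/-- Total weight of edges going out of `x`. -/
def outWeight [Fintype E] [DecidableEq V] (src : E → V) (w : E → ℝ) (x : V) : ℝ :=
  ∑ e : E, if src e = x then w e else 0

/-- The outward `α`-lazy one-step random walk at `x`. -/
noncomputable def lazyWalk [Fintype E] [DecidableEq V] (src tgt : E → V) (w : E → ℝ)
    (α : ℝ) (x z : V) : ℝ :=
  if z = x then α
  else (1 - α) * (∑ e : E, if src e = x ∧ tgt e = z then w e else 0) / outWeight src w x

/-- `A` is a coupling between the probability measures `μ₁` and `μ₂`. -/
def IsCoupling [Fintype V] (μ₁ μ₂ : V → ℝ) (A : V → V → ℝ) : Prop :=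
  (∀ u v, 0 ≤ A u v) ∧ (∀ u, ∑ v, A u v = μ₁ u) ∧ (∀ v, ∑ u, A u v = μ₂ v) ∧
    ∑ u, ∑ v, A u v = 1

/-- The directed Wasserstein distance from `μ₁` to `μ₂`. -/
noncomputable def wasserstein [Fintype V] (src tgt : E → V) (w : E → ℝ) (μ₁ μ₂ : V → ℝ) : ℝ :=
  sInf {c : ℝ | ∃ A : V → V → ℝ, IsCoupling μ₁ μ₂ A ∧
    c = ∑ u, ∑ v, A u v * gdist src tgt w u v}

/-- The directed Ollivier-type Ricci curvature of the edge `e`. -/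
noncomputable def ricci [Fintype V] [Fintype E] [DecidableEq V] (src tgt : E → V)
    (w : E → ℝ) (α : ℝ) (e : E) : ℝ :=
  1 - wasserstein src tgt w (lazyWalk src tgt w α (src e)) (lazyWalk src tgt w α (tgt e)) /
      gdist src tgt w (src e) (tgt e)

/-- Euclidean norm of a weight vector. -/
noncomputable def enorm [Fintype E] (u : E → ℝ) : ℝ := Real.sqrt (∑ e : E, (u e) ^ 2)

/-!
The two bounds on `κ_e ρ_e` come from `0 ≤ W ≤ Σ_τ w_τ` and `0 ≤ ρ_e ≤ w_e`: any transport plan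
moves unit mass over distances at most `Σ_τ w_τ`, since strong connectivity joins any two vertices
by a path using each edge at most once. For nonnegative weights they give
`(1 - s) w_e ≤ w_e⁺ ≤ w_e + s Σ_τ w_τ` for one step `w ↦ w⁺` of the flow. Iterating, the weights
stay above `(1 - s)^j w_{0,e} > 0`, so the flow never leaves the positive weights, and the total
weight grows at most by the factor `1 + m s` per step. Uniqueness holds because the flow is an
explicit recursion.
-/

theorem List.exists_eq_append_cons_append_cons_of_not_nodup {α : Type*} {l : List α}
    (h : ¬ l.Nodup) : ∃ a x b c, l = a ++ x :: (b ++ x :: c) := by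
  induction l with
  | nil => exact absurd List.nodup_nil h
  | cons y l ih =>
    by_cases hy : y ∈ l
    · obtain ⟨b, c, rfl⟩ := List.append_of_mem hy
      exact ⟨[], y, b, c, rfl⟩
    · obtain ⟨a, x, b, c, rfl⟩ := ih fun hl => h (hl.cons hy)
      exact ⟨y :: a, x, b, c, rfl⟩

theorem Function.eq_iterate_of_succ {α : Type*} {f : α → α} {u : ℕ → α}
    (h : ∀ n, u (n + 1) = f (u n)) : u = fun n => f^[n] (u 0) := by
  funext n
  induction n with
  | zero => rfl
  | succ n ih => rw [h, ih, Function.iterate_succ_apply']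

section Paths

variable {src tgt : E → V}

theorem isPathFrom_append {x y : V} {p q : List E} :
    IsPathFrom src tgt x y (p ++ q) ↔
      ∃ z, IsPathFrom src tgt x z p ∧ IsPathFrom src tgt z y q := by
  induction p generalizing x with
  | nil => exact ⟨fun h => ⟨x, rfl, h⟩, fun ⟨z, (hxz : x = z), h⟩ => hxz ▸ h⟩
  | cons e p ih => simp only [List.cons_append, IsPathFrom, ih, and_assoc, exists_and_left]

theorem IsPathFrom.exists_nodup {x y : V} {p : List E} (hp : IsPathFrom src tgt x y p) :
    ∃ q, IsPathFrom src tgt x y q ∧ q.Nodup := by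
  by_cases hnd : p.Nodup
  · exact ⟨p, hp, hnd⟩
  obtain ⟨a, e, b, c, hsplit⟩ := List.exists_eq_append_cons_append_cons_of_not_nodup hnd
  obtain ⟨z, ha, hez, hrest⟩ := isPathFrom_append.1 (hsplit ▸ hp)
  obtain ⟨u, -, -, hc⟩ := isPathFrom_append.1 hrest
  exact (isPathFrom_append.2
    ⟨z, ha, show IsPathFrom src tgt z y (e :: c) from ⟨hez, hc⟩⟩).exists_nodup
termination_by p.length
decreasing_by simp only [hsplit, List.length_append, List.length_cons]; omega

theorem StronglyConnected.exists_nodup_path (hsc : StronglyConnected src tgt) (x y : V) :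
    ∃ p, IsPathFrom src tgt x y p ∧ p.Nodup :=
  let ⟨_, hp⟩ := hsc x y
  hp.exists_nodup

variable {w : E → ℝ}

theorem pathWeight_nonneg (hw : ∀ e, 0 ≤ w e) (p : List E) : 0 ≤ pathWeight w p :=
  List.sum_nonneg fun _ hc => by
    obtain ⟨e, -, rfl⟩ := List.mem_map.1 hc
    exact hw e

theorem pathWeight_le_sum_of_nodup [Fintype E] (hw : ∀ e, 0 ≤ w e) {p : List E}
    (hp : p.Nodup) : pathWeight w p ≤ ∑ τ, w τ := by
  classical
  rw [pathWeight, ← List.sum_toFinset w hp]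
  exact sum_le_sum_of_subset_of_nonneg (subset_univ _) fun τ _ _ => hw τ

theorem gdist_nonneg (hw : ∀ e, 0 ≤ w e) (x y : V) : 0 ≤ gdist src tgt w x y :=
  Real.sInf_nonneg <| by
    rintro c ⟨p, -, rfl⟩
    exact pathWeight_nonneg hw p

theorem gdist_le_pathWeight (hw : ∀ e, 0 ≤ w e) {x y : V} {p : List E}
    (hp : IsPathFrom src tgt x y p) : gdist src tgt w x y ≤ pathWeight w p :=
  csInf_le ⟨0, by rintro c ⟨q, -, rfl⟩; exact pathWeight_nonneg hw q⟩ ⟨p, hp, rfl⟩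

theorem gdist_le_weight (hw : ∀ e, 0 ≤ w e) (e : E) : gdist src tgt w (src e) (tgt e) ≤ w e := by
  simpa [pathWeight] using gdist_le_pathWeight (p := [e]) hw ⟨rfl, rfl⟩

theorem gdist_le_sum [Fintype E] (hsc : StronglyConnected src tgt) (hw : ∀ e, 0 ≤ w e)
    (x y : V) : gdist src tgt w x y ≤ ∑ τ, w τ := by
  obtain ⟨p, hp, hnd⟩ := hsc.exists_nodup_path x y
  exact (gdist_le_pathWeight hw hp).trans (pathWeight_le_sum_of_nodup hw hnd)

end Paths

section Curvature

variable [Fintype V] {src tgt : E → V} {w : E → ℝ}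

theorem IsCoupling.cost_nonneg {μ₁ μ₂ : V → ℝ} {A : V → V → ℝ} (hA : IsCoupling μ₁ μ₂ A)
    (hw : ∀ e, 0 ≤ w e) : 0 ≤ ∑ u, ∑ v, A u v * gdist src tgt w u v :=
  sum_nonneg fun u _ => sum_nonneg fun v _ => mul_nonneg (hA.1 u v) (gdist_nonneg hw u v)

theorem wasserstein_nonneg (hw : ∀ e, 0 ≤ w e) (μ₁ μ₂ : V → ℝ) :
    0 ≤ wasserstein src tgt w μ₁ μ₂ :=
  Real.sInf_nonneg fun _ ⟨_, hA, hc⟩ => hc ▸ hA.cost_nonneg hw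

theorem wasserstein_le_of_forall_gdist_le (hw : ∀ e, 0 ≤ w e) {D : ℝ} (hD : 0 ≤ D)
    (hdist : ∀ u v, gdist src tgt w u v ≤ D) (μ₁ μ₂ : V → ℝ) :
    wasserstein src tgt w μ₁ μ₂ ≤ D := by
  unfold wasserstein
  set costs := {c : ℝ | ∃ A : V → V → ℝ, IsCoupling μ₁ μ₂ A ∧
    c = ∑ u, ∑ v, A u v * gdist src tgt w u v}
  rcases costs.eq_empty_or_nonempty with hempty | ⟨c, A, hA, rfl⟩
  · rwa [hempty, Real.sInf_empty]
  have hbdd : BddBelow costs := ⟨0, fun _ ⟨_, hA, hc⟩ => hc ▸ hA.cost_nonneg hw⟩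
  calc sInf costs ≤ ∑ u, ∑ v, A u v * gdist src tgt w u v := csInf_le hbdd ⟨A, hA, rfl⟩
    _ ≤ ∑ u, ∑ v, A u v * D :=
        sum_le_sum fun u _ => sum_le_sum fun v _ => mul_le_mul_of_nonneg_left (hdist u v) (hA.1 u v)
    _ = D := by simp only [← sum_mul, hA.2.2.2, one_mul]

variable [Fintype E] [DecidableEq V]

theorem ricci_mul_gdist_of_ne_zero {α : ℝ} {e : E} (h : gdist src tgt w (src e) (tgt e) ≠ 0) :
    ricci src tgt w α e * gdist src tgt w (src e) (tgt e) =
      gdist src tgt w (src e) (tgt e) -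
        wasserstein src tgt w (lazyWalk src tgt w α (src e)) (lazyWalk src tgt w α (tgt e)) := by
  rw [ricci, sub_mul, one_mul, div_mul_cancel₀ _ h]

-- When `ρ_e = 0` the division in `ricci` returns `0`, so both bounds below hold with `κ_e ρ_e = 0`.
theorem ricci_mul_gdist_le_weight (hw : ∀ e, 0 ≤ w e) (α : ℝ) (e : E) :
    ricci src tgt w α e * gdist src tgt w (src e) (tgt e) ≤ w e := by
  rcases eq_or_ne (gdist src tgt w (src e) (tgt e)) 0 with h | h
  · rw [h, mul_zero]
    exact hw e
  rw [ricci_mul_gdist_of_ne_zero h]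
  exact (sub_le_self _ (wasserstein_nonneg hw _ _)).trans (gdist_le_weight hw e)

theorem neg_sum_le_ricci_mul_gdist (hsc : StronglyConnected src tgt) (hw : ∀ e, 0 ≤ w e)
    (α : ℝ) (e : E) : -∑ τ, w τ ≤ ricci src tgt w α e * gdist src tgt w (src e) (tgt e) := by
  have hsum : 0 ≤ ∑ τ, w τ := sum_nonneg fun τ _ => hw τ
  rcases eq_or_ne (gdist src tgt w (src e) (tgt e)) 0 with h | h
  · rw [h, mul_zero, neg_nonpos]
    exact hsum
  have hρ : 0 ≤ gdist src tgt w (src e) (tgt e) := gdist_nonneg hw _ _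
  have hW : wasserstein src tgt w (lazyWalk src tgt w α (src e)) (lazyWalk src tgt w α (tgt e)) ≤
      ∑ τ, w τ := wasserstein_le_of_forall_gdist_le hw hsum (gdist_le_sum hsc hw) _ _
  rw [ricci_mul_gdist_of_ne_zero h]
  linarith

end Curvature

section Flow

variable [Fintype V] [Fintype E] [DecidableEq V] {src tgt : E → V} {α s : ℝ}

variable (src tgt α s) in
noncomputable def ricciFlowStep (w : E → ℝ) (e : E) : ℝ :=
  w e - s * ricci src tgt w α e * gdist src tgt w (src e) (tgt e)

theorem one_sub_mul_le_ricciFlowStep (hs : 0 ≤ s) {w : E → ℝ} (hw : ∀ e, 0 ≤ w e) (e : E) :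
    (1 - s) * w e ≤ ricciFlowStep src tgt α s w e := by
  rw [ricciFlowStep, mul_assoc, sub_mul, one_mul]
  exact sub_le_sub_left (mul_le_mul_of_nonneg_left (ricci_mul_gdist_le_weight hw α e) hs) _

theorem ricciFlowStep_le (hsc : StronglyConnected src tgt) (hs : 0 ≤ s) {w : E → ℝ}
    (hw : ∀ e, 0 ≤ w e) (e : E) : ricciFlowStep src tgt α s w e ≤ w e + s * ∑ τ, w τ := by
  have := mul_le_mul_of_nonneg_left (neg_sum_le_ricci_mul_gdist hsc hw α e) hs
  rw [ricciFlowStep]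
  linarith

theorem sum_ricciFlowStep_le (hsc : StronglyConnected src tgt) (hs : 0 ≤ s) {w : E → ℝ}
    (hw : ∀ e, 0 ≤ w e) :
    ∑ e, ricciFlowStep src tgt α s w e ≤ (1 + Fintype.card E * s) * ∑ τ, w τ :=
  calc ∑ e, ricciFlowStep src tgt α s w e ≤ ∑ e, (w e + s * ∑ τ, w τ) :=
        sum_le_sum fun e _ => ricciFlowStep_le hsc hs hw e
    _ = (1 + Fintype.card E * s) * ∑ τ, w τ := by
        rw [sum_add_distrib, sum_const, card_univ, nsmul_eq_mul]
        ring

theorem one_sub_pow_mul_le_iterate_ricciFlowStep (hs0 : 0 ≤ s) (hs1 : s ≤ 1) {w₀ : E → ℝ}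
    (hw₀ : ∀ e, 0 ≤ w₀ e) (j : ℕ) (e : E) :
    (1 - s) ^ j * w₀ e ≤ (ricciFlowStep src tgt α s)^[j] w₀ e := by
  induction j generalizing e with
  | zero => simp
  | succ j ih =>
    have hw : ∀ e, 0 ≤ (ricciFlowStep src tgt α s)^[j] w₀ e := fun e =>
      (mul_nonneg (pow_nonneg (sub_nonneg.2 hs1) j) (hw₀ e)).trans (ih e)
    calc (1 - s) ^ (j + 1) * w₀ e = (1 - s) * ((1 - s) ^ j * w₀ e) := by ring
      _ ≤ (1 - s) * (ricciFlowStep src tgt α s)^[j] w₀ e :=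
          mul_le_mul_of_nonneg_left (ih e) (sub_nonneg.2 hs1)
      _ ≤ (ricciFlowStep src tgt α s)^[j + 1] w₀ e := by
          rw [Function.iterate_succ_apply']
          exact one_sub_mul_le_ricciFlowStep hs0 hw e

theorem iterate_ricciFlowStep_nonneg (hs0 : 0 ≤ s) (hs1 : s ≤ 1) {w₀ : E → ℝ}
    (hw₀ : ∀ e, 0 ≤ w₀ e) (j : ℕ) (e : E) : 0 ≤ (ricciFlowStep src tgt α s)^[j] w₀ e :=
  (mul_nonneg (pow_nonneg (sub_nonneg.2 hs1) j) (hw₀ e)).trans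
    (one_sub_pow_mul_le_iterate_ricciFlowStep hs0 hs1 hw₀ j e)

theorem sum_iterate_ricciFlowStep_le (hsc : StronglyConnected src tgt) (hs0 : 0 ≤ s)
    (hs1 : s ≤ 1) {w₀ : E → ℝ} (hw₀ : ∀ e, 0 ≤ w₀ e) (j : ℕ) :
    ∑ e, (ricciFlowStep src tgt α s)^[j] w₀ e ≤ (1 + Fintype.card E * s) ^ j * ∑ τ, w₀ τ := by
  induction j with
  | zero => simp
  | succ j ih =>
    rw [Function.iterate_succ_apply', pow_succ', mul_assoc]
    exact (sum_ricciFlowStep_le hsc hs0 (iterate_ricciFlowStep_nonneg hs0 hs1 hw₀ j)).trans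
      (mul_le_mul_of_nonneg_left ih (by positivity))

end Flow

theorem discrete_ricci_flow_exists_unique_general [Fintype V] [Fintype E] [DecidableEq V]
    (src tgt : E → V) (hsc : StronglyConnected src tgt)
    (α : ℝ)
    (s : ℝ) (hs0 : 0 < s) (hs1 : s < 1)
    (w0 : E → ℝ) (hw0 : ∀ e, 0 < w0 e) :
    ∃ W : ℕ → E → ℝ,
      ((∀ e, W 0 e = w0 e) ∧
        (∀ j e, 0 < W j e) ∧
        (∀ j e, W (j + 1) e =
          W j e - s * ricci src tgt (W j) α e * gdist src tgt (W j) (src e) (tgt e))) ∧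
      (∀ j e, (1 - s) ^ j * w0 e ≤ W j e ∧
        W j e ≤ (1 + (Fintype.card E : ℝ) * s) ^ j * ∑ τ, w0 τ) ∧
      (∀ W' : ℕ → E → ℝ,
        ((∀ e, W' 0 e = w0 e) ∧
          (∀ j e, 0 < W' j e) ∧
          (∀ j e, W' (j + 1) e =
            W' j e - s * ricci src tgt (W' j) α e * gdist src tgt (W' j) (src e) (tgt e))) →
        W' = W) := by
  set W : ℕ → E → ℝ := fun j => (ricciFlowStep src tgt α s)^[j] w0
  have hw0' : ∀ e, 0 ≤ w0 e := fun e => (hw0 e).le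
  have hlower : ∀ j e, (1 - s) ^ j * w0 e ≤ W j e :=
    one_sub_pow_mul_le_iterate_ricciFlowStep hs0.le hs1.le hw0'
  have hpos : ∀ j e, 0 < W j e := fun j e =>
    (mul_pos (pow_pos (sub_pos.2 hs1) j) (hw0 e)).trans_le (hlower j e)
  have hupper : ∀ j e, W j e ≤ (1 + (Fintype.card E : ℝ) * s) ^ j * ∑ τ, w0 τ := fun j e =>
    (single_le_sum (fun τ _ => (hpos j τ).le) (mem_univ e)).trans
      (sum_iterate_ricciFlowStep_le hsc hs0.le hs1.le hw0' j)
  refine ⟨W, ⟨fun e => rfl, hpos, fun j e => ?_⟩, fun j e => ⟨hlower j e, hupper j e⟩, ?_⟩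
  · exact congrFun (Function.iterate_succ_apply' _ j w0) e
  · rintro W' ⟨hinit, -, hstep⟩
    rw [Function.eq_iterate_of_succ (f := ricciFlowStep src tgt α s) fun j => funext (hstep j),
      funext hinit]

theorem discrete_ricci_flow_exists_unique [Fintype V] [Fintype E] [DecidableEq V]
    (src tgt : E → V) (hsc : StronglyConnected src tgt)
    (α : ℝ) (hα : α ∈ Set.Icc (0:ℝ) 1)
    (s : ℝ) (hs0 : 0 < s) (hs1 : s < 1)
    (w0 : E → ℝ) (hw0 : ∀ e, 0 < w0 e) :
    ∃ W : ℕ → E → ℝ,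
      ((∀ e, W 0 e = w0 e) ∧
        (∀ j e, 0 < W j e) ∧
        (∀ j e, W (j + 1) e =
          W j e - s * ricci src tgt (W j) α e * gdist src tgt (W j) (src e) (tgt e))) ∧
      (∀ j e, (1 - s) ^ j * w0 e ≤ W j e ∧
        W j e ≤ (1 + (Fintype.card E : ℝ) * s) ^ j * ∑ τ, w0 τ) ∧
      (∀ W' : ℕ → E → ℝ,
        ((∀ e, W' 0 e = w0 e) ∧
          (∀ j e, 0 < W' j e) ∧
          (∀ j e, W' (j + 1) e =
            W' j e - s * ricci src tgt (W' j) α e * gdist src tgt (W' j) (src e) (tgt e))) →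
        W' = W) :=
  discrete_ricci_flow_exists_unique_general src tgt hsc α s hs0 hs1 w0 hw0
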